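/- Let F be a field with char F ≠ 2 and let G be a finite simple graph with no isolated vertices such that: (i) the only u : V(G) → F with λ_e(u) = 0 for all edges e is u = 0; and (ii) G is MC-edge connected, meaning that for any two edges e and f of G there is a finite sequence S₁, …, S_m of subsets of the edge set of G, each coherent over F with no nonempty proper coherent subset, such that e ∈ S₁, f ∈ S_m, and Sᵢ ∩ Sᵢ₊₁ ≠ ∅ for 1 ≤ i ≤ m − 1. If g is a normal automorphism of the normal graph algebra N G over F such that for every edge e of G the image under g of the pair (0, δ_e) (δ_e the indicator function of e) is a scalar multiple of (0, δ_e), then g is a scalar automorphism: there is a nonzero α ∈ F with g(u, z) = (α·u, α²·z) for all (u, z). -/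
import Mathlib

/-- `edgeVal u e` is the sum of the values of `u` at the two endpoints of `e`,
written `λ_e(u)` in the paper. -/
def edgeVal {V F : Type*} [Field F] (u : V → F) : Sym2 V → F :=
  Sym2.lift ⟨fun x y => u x + u y, fun _ _ => add_comm _ _⟩

/-- The product of the normal graph algebra `N G = U_G × Z_G` over `F`. -/
def nmul {V F : Type*} [Field F] (G : SimpleGraph V)
    (a b : (V → F) × (G.edgeSet → F)) : (V → F) × (G.edgeSet → F) :=
  (0, fun e => edgeVal a.1 (e : Sym2 V) * edgeVal b.1 (e : Sym2 V))

/-- A finset `S` of edges is coherent over `F`: there are scalars `α_e`, not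
all zero, whose sum over the edges of `S` incident with each vertex is `0`. -/
def Coherent {V : Type*} (F : Type*) [Field F] [DecidableEq V]
    (S : Finset (Sym2 V)) : Prop :=
  ∃ α : Sym2 V → F, (∃ e ∈ S, α e ≠ 0) ∧
    ∀ x : V, ∑ e ∈ S, (if x ∈ e then α e else 0) = 0

lemma edgeVal_mk {V F : Type*} [Field F] (u : V → F) (x y : V) :
    edgeVal u s(x, y) = u x + u y := rfl

lemma edgeVal_sub {V F : Type*} [Field F] (u v : V → F) (e : Sym2 V) :
    edgeVal (u - v) e = edgeVal u e - edgeVal v e := by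
  induction e using Sym2.ind with
  | _ x y => simp only [edgeVal_mk, Pi.sub_apply]; ring

lemma edgeVal_smul {V F : Type*} [Field F] (a : F) (u : V → F) (e : Sym2 V) :
    edgeVal (a • u) e = a * edgeVal u e := by
  induction e using Sym2.ind with
  | _ x y => simp only [edgeVal_mk, Pi.smul_apply, smul_eq_mul]; ring

lemma edgeVal_eq_sum {V F : Type*} [Fintype V] [DecidableEq V] [Field F]
    {G : SimpleGraph V} {e : Sym2 V} (he : e ∈ G.edgeSet) (u : V → F) :
    edgeVal u e = ∑ x : V, (if x ∈ e then u x else 0) := by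
  induction e using Sym2.ind with
  | _ a b =>
    have hab : a ≠ b := (G.mem_edgeSet.mp he).ne
    have h : ∀ x : V, (if x ∈ (s(a,b) : Sym2 V) then u x else 0)
        = (if x = a then u x else 0) + (if x = b then u x else 0) := by
      intro x
      by_cases h1 : x = a <;> by_cases h2 : x = b <;>
        simp_all [Sym2.mem_iff]
    simp only [h, Finset.sum_add_distrib, Finset.sum_ite_eq', Finset.mem_univ,
      if_true, edgeVal_mk]

lemma edgeVal_single {V F : Type*} [Fintype V] [DecidableEq V] [Field F]
    {G : SimpleGraph V} {e : Sym2 V} (he : e ∈ G.edgeSet) (x : V) :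
    edgeVal (Pi.single x (1:F)) e = if x ∈ e then 1 else 0 := by
  induction e using Sym2.ind with
  | _ a b =>
    have hab : a ≠ b := (G.mem_edgeSet.mp he).ne
    simp only [edgeVal_mk, Pi.single_apply, Sym2.mem_iff]
    by_cases h1 : x = a <;> by_cases h2 : x = b <;> simp_all [eq_comm]

lemma vert_to_fun {V F : Type*} [Fintype V] [DecidableEq V] [Field F]
    {G : SimpleGraph V} {S : Finset (Sym2 V)} (hS : ↑S ⊆ G.edgeSet)
    {α : Sym2 V → F} (hvert : ∀ x : V, ∑ e ∈ S, (if x ∈ e then α e else 0) = 0)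
    (u : V → F) : ∑ e ∈ S, α e * edgeVal u e = 0 := by
  have h1 : ∑ e ∈ S, α e * edgeVal u e
      = ∑ e ∈ S, ∑ x : V, (if x ∈ e then α e * u x else 0) := by
    refine Finset.sum_congr rfl fun e heS => ?_
    rw [edgeVal_eq_sum (hS heS) u, Finset.mul_sum]
    exact Finset.sum_congr rfl fun x _ => by split <;> simp
  rw [h1, Finset.sum_comm]
  refine Finset.sum_eq_zero fun x _ => ?_
  have h2 : ∑ e ∈ S, (if x ∈ e then α e * u x else 0)
      = (∑ e ∈ S, (if x ∈ e then α e else 0)) * u x := by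
    rw [Finset.sum_mul]
    exact Finset.sum_congr rfl fun e _ => by split <;> simp
  rw [h2, hvert x, zero_mul]

lemma fun_to_vert {V F : Type*} [Fintype V] [DecidableEq V] [Field F]
    {G : SimpleGraph V} {S : Finset (Sym2 V)} (hS : ↑S ⊆ G.edgeSet)
    {α : Sym2 V → F} (hfun : ∀ u : V → F, ∑ e ∈ S, α e * edgeVal u e = 0)
    (x : V) : ∑ e ∈ S, (if x ∈ e then α e else 0) = 0 := by
  have h := hfun (Pi.single x 1)
  rw [Finset.sum_congr rfl fun e heS => by
    rw [edgeVal_single (hS heS) x]] at h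
  simpa using h

theorem edge_scaling_automorphism_is_scalar
    {V F : Type*} [Fintype V] [DecidableEq V] [Field F]
    (hchar2 : ringChar F ≠ 2)
    (G : SimpleGraph V) [DecidableRel G.Adj]
    (hnoiso : ∀ v : V, ∃ w : V, G.Adj v w)
    (hann : ∀ u : V → F, (∀ e ∈ G.edgeSet, edgeVal u e = 0) → u = 0)
    (hmc : ∀ e ∈ G.edgeSet, ∀ f ∈ G.edgeSet,
      ∃ (m : ℕ) (S : Fin (m + 1) → Finset (Sym2 V)),
        (∀ i, ↑(S i) ⊆ G.edgeSet ∧ Coherent F (S i) ∧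
          ∀ T ⊆ S i, T.Nonempty → T ≠ S i → ¬ Coherent F T) ∧
        e ∈ S 0 ∧ f ∈ S (Fin.last m) ∧
        ∀ i : Fin m, (S i.castSucc ∩ S i.succ).Nonempty)
    (g : ((V → F) × (G.edgeSet → F)) ≃ₗ[F] ((V → F) × (G.edgeSet → F)))
    (hmul : ∀ a b, g (nmul G a b) = nmul G (g a) (g b))
    (hU : ∀ u : V → F, (g (u, 0)).2 = 0)
    (hZ : ∀ z : G.edgeSet → F, (g (0, z)).1 = 0)
    (hscale : ∀ e : G.edgeSet, ∃ c : F,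
      g (0, fun f => if f = e then 1 else 0) =
        (0, fun f => if f = e then c else 0)) :
    ∃ α : F, α ≠ 0 ∧
      ∀ a : (V → F) × (G.edgeSet → F), g a = (α • a.1, α ^ 2 • a.2) := by
  classical
  by_cases hV : Nonempty V
  case neg =>
    -- trivial case: V empty
    refine ⟨1, one_ne_zero, fun a => ?_⟩
    have hE : IsEmpty G.edgeSet := by
      constructor; rintro ⟨e, he⟩
      induction e using Sym2.ind with
      | _ x y => exact hV ⟨x⟩
    have h1 : a.1 = 0 := funext fun v => (hV ⟨v⟩).elim
    have h2 : a.2 = 0 := funext fun e => (hE.false e).elim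
    have ha : a = 0 := Prod.ext h1 h2
    rw [ha, map_zero]
    refine Prod.ext ?_ ?_ <;> simp
  case pos =>
  choose c hc using hscale
  -- the action of g on Z is diagonal
  have hB : ∀ z : G.edgeSet → F, (g (0, z)).2 = fun e => c e * z e := by
    intro z
    have hz : ((0 : V → F), z)
        = ∑ f : G.edgeSet, z f •
            ((0 : V → F), fun f' => if f' = f then (1:F) else 0) := by
      refine Prod.ext ?_ ?_
      · simp [Prod.fst_sum, Prod.smul_mk]
      · funext e
        simp [Prod.snd_sum, Finset.sum_apply, mul_ite, Finset.sum_ite_eq]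
    rw [hz, map_sum]
    funext e
    simp only [map_smul, hc]
    simp [Prod.snd_sum, Finset.sum_apply, mul_ite, Finset.sum_ite_eq, mul_comm]
  have hsplit : ∀ (u : V → F) (z : G.edgeSet → F),
      g (u, z) = ((g (u, 0)).1, fun e => c e * z e) := by
    intro u z
    have h : ((u, z) : (V → F) × (G.edgeSet → F)) = (u, 0) + (0, z) := by
      simp
    rw [h, map_add]
    refine Prod.ext ?_ ?_
    · simp [hZ]
    · rw [Prod.snd_add, hU, hB]; simp
  -- key multiplicative identity
  have key : ∀ (e : G.edgeSet) (u v : V → F),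
      edgeVal ((g (u, 0)).1) e.1 * edgeVal ((g (v, 0)).1) e.1
        = c e * (edgeVal u e.1 * edgeVal v e.1) := by
    intro e u v
    have h := congrFun (congrArg Prod.snd (hmul (u, 0) (v, 0))) e
    have h1 : nmul G (u, 0) (v, 0)
        = ((0 : V → F), fun e : G.edgeSet => edgeVal u e.1 * edgeVal v e.1) := rfl
    rw [h1] at h
    rw [congrFun (hB _) e] at h
    exact h.symm
  -- c e is nonzero
  have hcne : ∀ e : G.edgeSet, c e ≠ 0 := by
    intro e h0
    have h1 : g (0, fun f => if f = e then (1:F) else 0) = g 0 := by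
      rw [hc e, map_zero]
      refine Prod.ext rfl ?_
      funext f; simp [h0]
    have h2 := g.injective h1
    have h3 := congrFun (congrArg Prod.snd h2) e
    simp at h3
  -- choose a test vector for each edge
  have hw : ∀ e : G.edgeSet, ∃ u : V → F, edgeVal u e.1 = 1 := by
    rintro ⟨e, he⟩
    induction e using Sym2.ind with
    | _ a b =>
      have hab : a ≠ b := (G.mem_edgeSet.mp he).ne
      exact ⟨Pi.single a 1, by
        simp [edgeVal_mk, Pi.single_apply, hab, Ne.symm hab]⟩
  choose w hwval using hw
  set β : G.edgeSet → F := fun e => edgeVal ((g (w e, 0)).1) e.1 with hβ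
  have hcβ : ∀ e : G.edgeSet, c e = β e * β e := by
    intro e
    have h := key e (w e) (w e)
    rw [hwval] at h
    simp only [hβ] at h ⊢
    rw [h]; ring
  have hβne : ∀ e : G.edgeSet, β e ≠ 0 := by
    intro e h0
    exact hcne e (by rw [hcβ e, h0, mul_zero])
  have hlin : ∀ (e : G.edgeSet) (u : V → F),
      edgeVal ((g (u, 0)).1) e.1 = β e * edgeVal u e.1 := by
    intro e u
    have h := key e u (w e)
    rw [hwval, mul_one, hcβ e] at h
    have h2 : edgeVal ((g (u, 0)).1) e.1 * β e
        = (β e * edgeVal u e.1) * β e := by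
      rw [h]; ring
    exact mul_right_cancel₀ (hβne e) h2
  -- extend β to all of Sym2 V
  set b : Sym2 V → F := fun e =>
    if h : e ∈ G.edgeSet then β ⟨e, h⟩ else 0 with hb
  have hbval : ∀ e : G.edgeSet, b e.1 = β e := by
    rintro ⟨e, he⟩; simp [hb, he]
  -- β is constant on minimal coherent sets
  have hconst : ∀ S : Finset (Sym2 V), ↑S ⊆ G.edgeSet → Coherent F S →
      (∀ T ⊆ S, T.Nonempty → T ≠ S → ¬ Coherent F T) →
      ∀ e ∈ S, ∀ f ∈ S, b e = b f := by
    intro S hS hcoh hmin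
    obtain ⟨α, ⟨e₁, he₁S, he₁⟩, hvert⟩ := hcoh
    -- the coherence vector has full support
    have hsupp : ∀ e ∈ S, α e ≠ 0 := by
      intro f hfS hf0
      refine hmin (S.filter fun e => α e ≠ 0) (Finset.filter_subset _ _)
        ⟨e₁, Finset.mem_filter.mpr ⟨he₁S, he₁⟩⟩ ?_
        ⟨α, ⟨e₁, Finset.mem_filter.mpr ⟨he₁S, he₁⟩, he₁⟩, fun x => ?_⟩
      · intro hTS
        have := hTS ▸ hfS
        exact (Finset.mem_filter.mp this).2 hf0
      · rw [Finset.sum_filter,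
          show (∑ e ∈ S, if α e ≠ 0 then (if x ∈ e then α e else 0) else 0)
              = ∑ e ∈ S, (if x ∈ e then α e else 0) from
            Finset.sum_congr rfl fun e _ => by
              by_cases h : α e = 0 <;> simp [h]]
        exact hvert x
    have hfun : ∀ u : V → F, ∑ e ∈ S, α e * edgeVal u e = 0 :=
      vert_to_fun hS hvert
    have hfun2 : ∀ u : V → F, ∑ e ∈ S, (α e * b e) * edgeVal u e = 0 := by
      intro u
      have h := hfun ((g (u, 0)).1)
      rw [← h]
      refine Finset.sum_congr rfl fun e heS => ?_
      have he := hS heS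
      have := hlin ⟨e, he⟩ u
      rw [this]
      rw [show b e = β ⟨e, he⟩ from hbval ⟨e, he⟩]
      ring
    have hvert2 : ∀ x : V,
        ∑ e ∈ S, (if x ∈ e then α e * b e else 0) = 0 :=
      fun_to_vert hS hfun2
    have hvert3 : ∀ x : V,
        ∑ e ∈ S, (if x ∈ e then α e * (b e - b e₁) else 0) = 0 := by
      intro x
      have h1 := hvert2 x
      have h2 := hvert x
      have h3 : ∑ e ∈ S, (if x ∈ e then α e * (b e - b e₁) else 0)
          = ∑ e ∈ S, ((if x ∈ e then α e * b e else 0)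
              - b e₁ * (if x ∈ e then α e else 0)) := by
        refine Finset.sum_congr rfl fun e _ => ?_
        split <;> ring
      rw [h3, Finset.sum_sub_distrib, h1, ← Finset.mul_sum, h2, mul_zero,
        sub_zero]
    have hzero : ∀ e ∈ S, α e * (b e - b e₁) = 0 := by
      by_contra hcon
      push_neg at hcon
      obtain ⟨f, hfS, hf⟩ := hcon
      refine hmin (S.filter fun e => α e * (b e - b e₁) ≠ 0)
        (Finset.filter_subset _ _)
        ⟨f, Finset.mem_filter.mpr ⟨hfS, hf⟩⟩ ?_
        ⟨fun e => α e * (b e - b e₁),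
          ⟨f, Finset.mem_filter.mpr ⟨hfS, hf⟩, hf⟩, fun x => ?_⟩
      · intro hTS
        have := hTS ▸ he₁S
        have h := (Finset.mem_filter.mp this).2
        simp at h
      · rw [Finset.sum_filter,
          show (∑ e ∈ S, if α e * (b e - b e₁) ≠ 0
                then (if x ∈ e then α e * (b e - b e₁) else 0) else 0)
              = ∑ e ∈ S, (if x ∈ e then α e * (b e - b e₁) else 0) from
            Finset.sum_congr rfl fun e _ => by
              by_cases h : α e * (b e - b e₁) = 0 <;> simp [h]]
        exact hvert3 x
    intro e heS f hfS
    have hbe : b e = b e₁ :=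
      sub_eq_zero.mp ((mul_eq_zero.mp (hzero e heS)).resolve_left (hsupp e heS))
    have hbf : b f = b e₁ :=
      sub_eq_zero.mp ((mul_eq_zero.mp (hzero f hfS)).resolve_left (hsupp f hfS))
    rw [hbe, hbf]
  -- b is constant along MC-chains, hence globally
  have hchain : ∀ e f : G.edgeSet, b e.1 = b f.1 := by
    intro e f
    obtain ⟨m, S, hSp, he0, hfl, hov⟩ := hmc e.1 e.2 f.1 f.2
    have main : ∀ k : ℕ, ∀ hk : k < m + 1, ∀ x ∈ S ⟨k, hk⟩, b x = b e.1 := by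
      intro k
      induction k with
      | zero =>
        intro hk x hx
        have h0 : (0 : Fin (m+1)) = ⟨0, hk⟩ := by ext; simp
        rw [h0] at he0
        exact hconst (S ⟨0, hk⟩) (hSp _).1 (hSp _).2.1 (hSp _).2.2 x hx e.1 he0
      | succ n ih =>
        intro hk x hx
        have hn : n < m + 1 := by omega
        have hnm : n < m := by omega
        obtain ⟨y, hy⟩ := hov ⟨n, hnm⟩
        rw [Finset.mem_inter] at hy
        have e1 : (⟨n, hnm⟩ : Fin m).castSucc = (⟨n, hn⟩ : Fin (m+1)) := rfl
        have e2 : (⟨n, hnm⟩ : Fin m).succ = (⟨n+1, hk⟩ : Fin (m+1)) := rfl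
        have hy1 : y ∈ S ⟨n, hn⟩ := by rw [← e1]; exact hy.1
        have hy2 : y ∈ S ⟨n+1, hk⟩ := by rw [← e2]; exact hy.2
        have hb1 : b y = b e.1 := ih hn y hy1
        have hb2 := hconst (S ⟨n+1, hk⟩) (hSp _).1 (hSp _).2.1 (hSp _).2.2
          x hx y hy2
        rw [hb2, hb1]
    have hlast : (Fin.last m) = (⟨m, Nat.lt_succ_self m⟩ : Fin (m+1)) := rfl
    exact (main m (Nat.lt_succ_self m) f.1 (by rw [← hlast]; exact hfl)).symm
  -- pick a base edge
  obtain ⟨v⟩ := hV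
  obtain ⟨v', hadj⟩ := hnoiso v
  set e₀ : G.edgeSet := ⟨s(v, v'), G.mem_edgeSet.mpr hadj⟩ with he₀
  have hball : ∀ e : G.edgeSet, β e = β e₀ := by
    intro e
    rw [← hbval e, ← hbval e₀]
    exact hchain e e₀
  refine ⟨β e₀, hβne e₀, ?_⟩
  rintro ⟨u, z⟩
  rw [hsplit u z]
  refine Prod.ext ?_ ?_
  · have h0 : (g (u, 0)).1 - β e₀ • u = 0 := by
      apply hann
      intro e he
      rw [edgeVal_sub, edgeVal_smul]
      rw [show edgeVal ((g (u, 0)).1) e = β ⟨e, he⟩ * edgeVal u e from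
        hlin ⟨e, he⟩ u]
      rw [hball ⟨e, he⟩, sub_self]
    exact sub_eq_zero.mp h0
  · funext e
    show c e * z e = (β e₀ ^ 2 • z) e
    rw [hcβ e, hball e]
    simp [sq, mul_assoc]
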